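/- For every integer n with n ≡ 1 (mod 8) and 9 ≤ n ≤ 201, the n-crossing permutations over S_{n+3} generate exactly the subgroup of parity-preserving permutations that are even on each parity class: C(n, n+3) equals the set of σ ∈ S_{n+3} such that σ(i) ≡ i (mod 2) for all i, the permutation induced by σ on the odd-numbered points is even, and the permutation induced by σ on the even-numbered points is even. (Writing n = 8k + 1, this subgroup is isomorphic to A_{4k+2} × A_{4k+2}.) -/

import Mathlib

/-!
For `n = 8k + 1`, each `π_j` reverses an interval of odd length, so it preserves parity and
acts on each parity class as a product of `2k` disjoint transpositions; hence `C(n, m)`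
consists of permutations that are even on both classes.

Conversely, `π_j π_{j+1} π_{j+2} π_{j+1}` is the 3-cycle `(j, j+n-1, j+n+1)`, and conjugation by
the shifts `π_{j+1} π_j`, which move a window of points up by two, turns it into every 3-cycle
`(a, a+2, a+4)` of consecutive points of one parity class. Writing `s_i` for the transposition of
the `i`-th and `(i+1)`-st point of a class, these 3-cycles are the products `s_i s_{i+1}`, so all
transpositions of the class lie in the single coset `s_0 C(n, m)`; thus any product of an even
number of them lies in `C(n, m)`. The parity of the number of transpositions is well defined
because it can be read off from the sign on a finite set containing all points involved.
-/

/-- The underlying function of the `n`-crossing permutation `π_j` over `{1, …, m}` (as a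
function on `ℕ`): it sends `j + k` to `j + n - 1 - k` for `0 ≤ k ≤ n - 1` and fixes all
other points. -/
def crossFun (n j i : ℕ) : ℕ :=
  if j ≤ i ∧ i < j + n then 2 * j + n - 1 - i else i

lemma crossFun_involutive (n j : ℕ) : Function.Involutive (crossFun n j) := by
  intro i
  unfold crossFun
  split_ifs <;> omega

/-- The `n`-crossing permutation `π_j`, viewed as a permutation of `ℕ` fixing every point
outside `{j, …, j + n - 1}`. -/
def crossPerm (n j : ℕ) : Equiv.Perm ℕ :=
  Function.Involutive.toPerm _ (crossFun_involutive n j)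

/-- `C n m` is the subgroup of the symmetric group `S_m` (realized as permutations of `ℕ`
supported on `{1, …, m}`) generated by the `n`-crossing permutations `π_1, …, π_{m-n+1}`. -/
def C (n m : ℕ) : Subgroup (Equiv.Perm ℕ) :=
  Subgroup.closure {σ | ∃ j, 1 ≤ j ∧ j ≤ m - n + 1 ∧ σ = crossPerm n j}


/-- A (finitely supported) permutation is even if it is a product of an even number of
transpositions. For a permutation supported on `{1, ..., m}` this says exactly that it lies
in the alternating group `A_m`. -/
def IsEvenPerm (s : Equiv.Perm ℕ) : Prop :=
  ∃ l : List (Equiv.Perm ℕ), (∀ t ∈ l, t.IsSwap) ∧ l.prod = s ∧ Even l.length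

open Equiv Equiv.Perm

theorem Subgroup.list_prod_mem_of_even_length {G : Type*} [Group G] {H : Subgroup G} {T : Set G}
    (hT : ∀ t ∈ T, ∀ t' ∈ T, t * t' ∈ H) {l : List G} (hl : ∀ t ∈ l, t ∈ T)
    (he : Even l.length) : l.prod ∈ H := by
  suffices key : (Even l.length → l.prod ∈ H) ∧ (Odd l.length → ∀ t ∈ T, t * l.prod ∈ H) from
    key.1 he
  clear he
  induction l with
  | nil => simp [one_mem]
  | cons a l ih =>
    have ih := ih fun t ht => hl t (List.mem_cons_of_mem a ht)
    have ha := hl a List.mem_cons_self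
    rw [List.length_cons, Nat.even_add_one, Nat.odd_add_one, Nat.not_even_iff_odd,
      Nat.not_odd_iff_even, List.prod_cons]
    refine ⟨fun h => ih.2 h a ha, fun h t ht => ?_⟩
    rw [← mul_assoc]
    exact mul_mem (hT t ht a ha) (ih.1 h)

theorem swap_mul_swap_mem_of_adjacent {α : Type*} [DecidableEq α] {H : Subgroup (Perm α)}
    {f : ℕ → α} (hf : Function.Injective f) {I : ℕ}
    (h3 : ∀ i, i + 2 < I → swap (f i) (f (i + 1)) * swap (f (i + 1)) (f (i + 2)) ∈ H)
    {a b c d : α} (ha : a ∈ f '' Set.Iio I) (hb : b ∈ f '' Set.Iio I)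
    (hc : c ∈ f '' Set.Iio I) (hd : d ∈ f '' Set.Iio I) (hab : a ≠ b) (hcd : c ≠ d) :
    swap a b * swap c d ∈ H := by
  set s₀ := swap (f 0) (f 1)
  have adjacent : ∀ j, j + 1 < I → s₀ * swap (f j) (f (j + 1)) ∈ H := by
    intro j
    induction j with
    | zero => simp [s₀, one_mem]
    | succ j ih =>
      intro hj
      simpa [mul_assoc, swap_mul_self_mul] using mul_mem (ih (by omega)) (h3 j (by omega))
  have far : ∀ i j, i < j → j < I → s₀ * swap (f i) (f j) ∈ H := by
    intro i j hij hj
    induction j, hij using Nat.le_induction with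
    | base => exact adjacent i hj
    | succ j hij ih =>
      have conj : swap (f i) (f (j + 1)) =
          swap (f j) (f (j + 1)) * swap (f i) (f j) * (swap (f j) (f (j + 1)))⁻¹ := by
        rw [← swap_apply_apply, swap_apply_left,
          swap_apply_of_ne_of_ne (hf.ne (by omega)) (hf.ne (by omega))]
      have := mul_mem (mul_mem (adjacent j (by omega)) (inv_mem (ih (by omega))))
        (adjacent j (by omega))
      rw [conj]
      simpa [mul_assoc, swap_mul_self_mul] using this
  have chain : ∀ x ∈ f '' Set.Iio I, ∀ y ∈ f '' Set.Iio I, x ≠ y → s₀ * swap x y ∈ H := by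
    rintro _ ⟨i, hi, rfl⟩ _ ⟨j, hj, rfl⟩ hne
    rcases lt_trichotomy i j with h | rfl | h
    · exact far i j h hj
    · exact absurd rfl hne
    · rw [swap_comm]; exact far j i h hi
  simpa [mul_assoc, swap_mul_self_mul] using
    mul_mem (inv_mem (chain a ha b hb hab)) (chain c hc d hd hcd)

theorem exists_finset_of_forall_isSwap {α : Type*} [DecidableEq α] (l : List (Perm α))
    (hl : ∀ t ∈ l, IsSwap t) : ∃ s : Finset α, ∀ t ∈ l, ∃ a ∈ s, ∃ b ∈ s, a ≠ b ∧ t = swap a b := by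
  induction l with
  | nil => exact ⟨∅, by simp⟩
  | cons t l ih =>
    obtain ⟨s, hs⟩ := ih fun u hu => hl u (List.mem_cons_of_mem t hu)
    obtain ⟨a, b, hab, rfl⟩ := hl t List.mem_cons_self
    refine ⟨insert a (insert b s), ?_⟩
    rintro u (_ | ⟨_, hu⟩)
    · exact ⟨a, by simp, b, by simp, hab, rfl⟩
    · obtain ⟨x, hx, y, hy, hxy, rfl⟩ := hs u hu
      exact ⟨x, by simp [hx], y, by simp [hy], hxy, rfl⟩

theorem exists_ofSubtype_eq_list_prod {α : Type*} [DecidableEq α] (s : Finset α)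
    (l : List (Perm α)) (hl : ∀ t ∈ l, ∃ a ∈ s, ∃ b ∈ s, a ≠ b ∧ t = swap a b) :
    ∃ τ : Perm s, ofSubtype τ = l.prod ∧ sign τ = (-1) ^ l.length := by
  induction l with
  | nil => exact ⟨1, by simp, by simp⟩
  | cons t l ih =>
    obtain ⟨τ, hτ, hsign⟩ := ih fun u hu => hl u (List.mem_cons_of_mem t hu)
    obtain ⟨a, ha, b, hb, hab, rfl⟩ := hl t List.mem_cons_self
    refine ⟨swap ⟨a, ha⟩ ⟨b, hb⟩ * τ, ?_, ?_⟩
    · rw [map_mul, ofSubtype_swap_eq, hτ, List.prod_cons]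
    · rw [map_mul, sign_swap (by simpa using hab), hsign, List.length_cons, pow_succ']

theorem even_length_iff_of_list_prod_eq {α : Type*} [DecidableEq α] {l₁ l₂ : List (Perm α)}
    (h₁ : ∀ t ∈ l₁, IsSwap t) (h₂ : ∀ t ∈ l₂, IsSwap t) (h : l₁.prod = l₂.prod) :
    Even l₁.length ↔ Even l₂.length := by
  obtain ⟨s, hs⟩ := exists_finset_of_forall_isSwap (l₁ ++ l₂) fun t ht =>
    (List.mem_append.1 ht).elim (h₁ t) (h₂ t)
  obtain ⟨τ₁, hτ₁, hsign₁⟩ := exists_ofSubtype_eq_list_prod s l₁ fun t ht => hs t (by simp [ht])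
  obtain ⟨τ₂, hτ₂, hsign₂⟩ := exists_ofSubtype_eq_list_prod s l₂ fun t ht => hs t (by simp [ht])
  have hτ : τ₁ = τ₂ := ofSubtype_injective (by rw [hτ₁, hτ₂, h])
  have hpow : ((-1 : ℤˣ) ^ l₁.length) = (-1) ^ l₂.length := by rw [← hsign₁, ← hsign₂, hτ]
  rw [Int.units_pow_eq_pow_mod_two, Int.units_pow_eq_pow_mod_two (-1) l₂.length] at hpow
  rw [Nat.even_iff, Nat.even_iff]
  rcases Nat.mod_two_eq_zero_or_one l₁.length with e₁ | e₁ <;>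
    rcases Nat.mod_two_eq_zero_or_one l₂.length with e₂ | e₂ <;>
    simp_all [Units.ext_iff]

theorem IsEvenPerm.even_length {σ : Perm ℕ} (hσ : IsEvenPerm σ) {l : List (Perm ℕ)}
    (hl : ∀ t ∈ l, IsSwap t) (hprod : l.prod = σ) : Even l.length := by
  obtain ⟨l₀, hl₀, hprod₀, heven₀⟩ := hσ
  exact (even_length_iff_of_list_prod_eq hl₀ hl (hprod₀.trans hprod.symm)).1 heven₀

theorem Equiv.Perm.IsSwap.inv {α : Type*} [DecidableEq α] {t : Perm α} (ht : IsSwap t) :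
    IsSwap t⁻¹ := by
  obtain ⟨x, y, hxy, rfl⟩ := ht
  exact ⟨x, y, hxy, swap_inv x y⟩

def evenPerms : Subgroup (Perm ℕ) where
  carrier := {σ | IsEvenPerm σ}
  one_mem' := ⟨[], by simp, rfl, ⟨0, rfl⟩⟩
  mul_mem' := by
    rintro _ _ ⟨l₁, hl₁, rfl, he₁⟩ ⟨l₂, hl₂, rfl, he₂⟩
    refine ⟨l₁ ++ l₂, fun t ht => ?_, List.prod_append, by simpa using he₁.add he₂⟩
    exact (List.mem_append.1 ht).elim (hl₁ t) (hl₂ t)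
  inv_mem' := by
    rintro _ ⟨l, hl, rfl, he⟩
    refine ⟨(l.map (·⁻¹)).reverse, ?_, (List.prod_inv_reverse l).symm, by simpa using he⟩
    simp only [List.mem_reverse, List.mem_map]
    rintro _ ⟨t, ht, rfl⟩
    exact (hl t ht).inv

def evenPermsOn (s : Set ℕ) : Subgroup (Perm ℕ) :=
  fixingSubgroup (Perm ℕ) sᶜ ⊓ evenPerms

theorem mem_evenPermsOn {s : Set ℕ} {σ : Perm ℕ} :
    σ ∈ evenPermsOn s ↔ (∀ i, σ i ≠ i → i ∈ s) ∧ IsEvenPerm σ := by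
  simp only [evenPermsOn, Subgroup.mem_inf, mem_fixingSubgroup_iff, Set.mem_compl_iff]
  exact and_congr (forall_congr' fun i => not_imp_comm) Iff.rfl

theorem evenPermsOn_mono {s t : Set ℕ} (h : s ⊆ t) : evenPermsOn s ≤ evenPermsOn t :=
  inf_le_inf_right _ (fixingSubgroup_antitone _ _ (Set.compl_subset_compl.2 h))

theorem list_prod_mem_evenPermsOn {s : Set ℕ} {l : List (Perm ℕ)}
    (hl : ∀ t ∈ l, ∃ a ∈ s, ∃ b ∈ s, a ≠ b ∧ t = swap a b) (he : Even l.length) :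
    l.prod ∈ evenPermsOn s := by
  refine Subgroup.mem_inf.2 ⟨list_prod_mem fun t ht => ?_, l, fun t ht => ?_, rfl, he⟩
  · obtain ⟨a, ha, b, hb, -, rfl⟩ := hl t ht
    rw [mem_fixingSubgroup_iff]
    intro y hy
    exact swap_apply_of_ne_of_ne (fun h => hy (h ▸ ha)) (fun h => hy (h ▸ hb))
  · obtain ⟨a, -, b, -, hab, rfl⟩ := hl t ht
    exact ⟨a, b, hab, rfl⟩

theorem evenPermsOn_le_centralizer {s t : Set ℕ} (h : Disjoint s t) :
    evenPermsOn s ≤ Subgroup.centralizer (evenPermsOn t) := by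
  intro σ hσ τ hτ
  have hσ' := (mem_evenPermsOn.1 hσ).1
  have hτ' := (mem_evenPermsOn.1 hτ).1
  refine (Disjoint.commute fun x => ?_).eq.symm
  by_contra! hx
  exact h.ne_of_mem (hσ' x hx.1) (hτ' x hx.2) rfl

theorem mem_evenPermsOn_sup {s t : Set ℕ} (h : Disjoint s t) {σ : Perm ℕ} :
    σ ∈ evenPermsOn s ⊔ evenPermsOn t ↔ ∃ a ∈ evenPermsOn s, ∃ b ∈ evenPermsOn t, a * b = σ := by
  rw [← SetLike.mem_coe, Subgroup.coe_mul_of_left_le_normalizer_right _ _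
    ((evenPermsOn_le_centralizer h).trans (Subgroup.centralizer_le_normalizer _)), Set.mem_mul]
  rfl

theorem exists_list_swap_prod_eq {α : Type*} [DecidableEq α] {s : Finset α} {σ : Perm α}
    (hσ : ∀ x, σ x ≠ x → x ∈ s) :
    ∃ l : List (Perm α), l.prod = σ ∧ ∀ t ∈ l, ∃ a ∈ s, ∃ b ∈ s, a ≠ b ∧ t = swap a b := by
  have hσs : ∀ x, σ x ∈ s ↔ x ∈ s := fun x => by
    by_cases hx : σ x = x
    · rw [hx]
    · exact iff_of_true (hσ _ fun h => hx (σ.injective h)) (hσ x hx)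
  have hclosure : σ.subtypePerm hσs ∈ Submonoid.closure {τ : Perm s | τ.IsSwap} := by
    rw [mclosure_isSwap]
    trivial
  obtain ⟨l, hl, hprod⟩ := Submonoid.exists_list_of_mem_closure hclosure
  refine ⟨l.map ofSubtype, by rw [← map_list_prod, hprod, ofSubtype_subtypePerm _ hσ], ?_⟩
  simp only [List.mem_map]
  rintro _ ⟨t, ht, rfl⟩
  obtain ⟨a, b, hab, rfl⟩ := hl t ht
  exact ⟨a, a.2, b, b.2, Subtype.coe_ne_coe.2 hab, ofSubtype_swap_eq a b⟩

theorem evenPermsOn_image_le {H : Subgroup (Perm ℕ)} {f : ℕ → ℕ} (hf : Function.Injective f)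
    {I : ℕ} (h3 : ∀ i, i + 2 < I → swap (f i) (f (i + 1)) * swap (f (i + 1)) (f (i + 2)) ∈ H) :
    evenPermsOn (f '' Set.Iio I) ≤ H := by
  intro σ hσ
  obtain ⟨hsupp, heven⟩ := mem_evenPermsOn.1 hσ
  set S := (Finset.range I).image f
  have hS : ∀ x, x ∈ S ↔ x ∈ f '' Set.Iio I := by simp [S]
  obtain ⟨l, hprod, hl⟩ := exists_list_swap_prod_eq fun x hx => (hS x).2 (hsupp x hx)
  rw [← hprod]
  refine Subgroup.list_prod_mem_of_even_length
    (T := {t | ∃ a ∈ S, ∃ b ∈ S, a ≠ b ∧ t = swap a b}) ?_ hl (heven.even_length ?_ hprod)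
  · rintro _ ⟨a, ha, b, hb, hab, rfl⟩ _ ⟨c, hc, d, hd, hcd, rfl⟩
    exact swap_mul_swap_mem_of_adjacent hf h3 ((hS a).1 ha) ((hS b).1 hb) ((hS c).1 hc)
      ((hS d).1 hd) hab hcd
  · intro t ht
    obtain ⟨a, -, b, -, hab, rfl⟩ := hl t ht
    exact ⟨a, b, hab, rfl⟩

def parityClass (r m : ℕ) : Set ℕ := {i | i % 2 = r ∧ 1 ≤ i ∧ i ≤ m}

def mirrorSwaps (M a t : ℕ) : List (Perm ℕ) :=
  (List.range t).map fun i => swap (a + 2 * i) (M - (a + 2 * i))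

/-- Under `ht` the swapped pairs are disjoint, which gives the closed form. -/
theorem mirrorSwaps_prod_apply {M a t : ℕ} (hM : M % 2 = 0) (ht : 2 * a + 4 * t ≤ M + 2)
    (x : ℕ) : (mirrorSwaps M a t).prod x =
      if x % 2 = a % 2 ∧ (a ≤ x ∧ x < a + 2 * t ∨ M - (a + 2 * t) < x ∧ x ≤ M - a)
        then M - x else x := by
  induction t generalizing x with
  | zero =>
    simp only [mirrorSwaps, List.range_zero, List.map_nil, List.prod_nil, Perm.one_apply]
    split_ifs <;> omega
  | succ t ih =>
    rw [mirrorSwaps, List.range_succ, List.map_append, List.prod_append, ← mirrorSwaps,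
      List.map_singleton, List.prod_singleton, Perm.mul_apply, ih (by omega), swap_apply_def]
    split_ifs <;> omega

theorem crossPerm_eq_mirrorSwaps_prod_mul (t j : ℕ) :
    crossPerm (4 * t + 1) j =
      (mirrorSwaps (2 * j + 4 * t) j t).prod * (mirrorSwaps (2 * j + 4 * t) (j + 1) t).prod := by
  ext x
  rw [Perm.mul_apply, mirrorSwaps_prod_apply (by omega) (by omega),
    mirrorSwaps_prod_apply (by omega) (by omega)]
  change crossFun _ _ _ = _
  unfold crossFun
  split_ifs <;> omega

theorem mirrorSwaps_prod_mem {M a t m : ℕ} (hM : M % 2 = 0) (ht : 2 * a + 4 * t ≤ M + 2)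
    (hteven : Even t) (ha : 1 ≤ a) (hm : M - a ≤ m) :
    (mirrorSwaps M a t).prod ∈ evenPermsOn (parityClass (a % 2) m) := by
  refine list_prod_mem_evenPermsOn ?_ (by simpa [mirrorSwaps] using hteven)
  simp only [mirrorSwaps, List.mem_map, List.mem_range]
  rintro _ ⟨i, hi, rfl⟩
  exact ⟨a + 2 * i, ⟨by omega, by omega, by omega⟩, M - (a + 2 * i),
    ⟨by omega, by omega, by omega⟩, by omega, rfl⟩

theorem mul_swap_mul_swap_mul_inv {α : Type*} [DecidableEq α] (σ : Perm α) (a b c : α) :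
    σ * (swap a b * swap b c) * σ⁻¹ = swap (σ a) (σ b) * swap (σ b) (σ c) := by
  rw [swap_apply_apply, swap_apply_apply]
  group

theorem crossPerm_mem_C {n m j : ℕ} (hj : 1 ≤ j) (hjm : j + n ≤ m + 1) : crossPerm n j ∈ C n m :=
  Subgroup.subset_closure ⟨j, hj, by omega, rfl⟩

def crossShift (n j : ℕ) : Perm ℕ := crossPerm n (j + 1) * crossPerm n j

theorem crossShift_mem_C {n m j : ℕ} (hj : 1 ≤ j) (hjm : j + n ≤ m) : crossShift n j ∈ C n m :=
  mul_mem (crossPerm_mem_C (by omega) (by omega)) (crossPerm_mem_C hj (by omega))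

section crossShift

variable {n j x : ℕ}

theorem crossShift_apply_of_lt (hx : x < j) : crossShift n j x = x := by
  change crossFun _ _ (crossFun _ _ _) = _
  unfold crossFun
  split_ifs <;> omega

theorem crossShift_apply_of_mem (hjx : j ≤ x) (hxn : x + 2 ≤ j + n) : crossShift n j x = x + 2 := by
  change crossFun _ _ (crossFun _ _ _) = _
  unfold crossFun
  split_ifs <;> omega

theorem crossShift_apply_add (hn : 1 ≤ n) : crossShift n j (j + n) = j + 1 := by
  change crossFun _ _ (crossFun _ _ _) = _
  unfold crossFun
  split_ifs <;> omega

end crossShift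

theorem crossPerm_mul_crossPerm_mul_crossShift (n j : ℕ) (hn : 3 ≤ n) :
    crossPerm n j * crossPerm n (j + 1) * crossShift n (j + 1) =
      swap j (j + n - 1) * swap (j + n - 1) (j + n + 1) := by
  ext x
  simp only [crossShift, Perm.mul_apply, swap_apply_def]
  change crossFun _ _ (crossFun _ _ (crossFun _ _ (crossFun _ _ x))) = _
  unfold crossFun
  split_ifs <;> omega

section threeCycle

variable {n m : ℕ}

theorem swap_mul_swap_mem_C_base (hn : 6 ≤ n) (hm : n + 3 ≤ m) {j : ℕ} (hj : 1 ≤ j)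
    (hj2 : j ≤ 2) : swap j (j + 2) * swap (j + 2) (j + 4) ∈ C n m := by
  set ρ := crossShift n (j + 1)
  have hρ : ρ ∈ C n m := crossShift_mem_C (by omega) (by omega)
  have h₀ : swap j (j + n - 1) * swap (j + n - 1) (j + n + 1) ∈ C n m := by
    rw [← crossPerm_mul_crossPerm_mul_crossShift n j (by omega)]
    exact mul_mem (mul_mem (crossPerm_mem_C hj (by omega)) (crossPerm_mem_C (by omega)
      (by omega))) hρ
  have h₁ : swap j (j + n + 1) * swap (j + n + 1) (j + 2) ∈ C n m := by
    have := mul_mem (mul_mem hρ h₀) (inv_mem hρ)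
    rw [mul_swap_mul_swap_mul_inv, crossShift_apply_of_lt (by omega),
      crossShift_apply_of_mem (by omega) (by omega), show j + n - 1 + 2 = j + n + 1 by omega,
      show j + n + 1 = j + 1 + n by omega, crossShift_apply_add (by omega)] at this
    convert this using 3 <;> omega
  have := mul_mem (mul_mem hρ h₁) (inv_mem hρ)
  rwa [mul_swap_mul_swap_mul_inv, crossShift_apply_of_lt (by omega),
    show j + n + 1 = j + 1 + n by omega, crossShift_apply_add (by omega),
    crossShift_apply_of_mem (by omega) (by omega)] at this

theorem swap_mul_swap_mem_C_succ (hn : 6 ≤ n) (hm : n < m) {a : ℕ} (ha : 1 ≤ a) (ham : a + 6 ≤ m)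
    (h : swap a (a + 2) * swap (a + 2) (a + 4) ∈ C n m) :
    swap (a + 2) (a + 4) * swap (a + 4) (a + 6) ∈ C n m := by
  have hρ : crossShift n (min a (m - n)) ∈ C n m := crossShift_mem_C (by omega) (by omega)
  have := mul_mem (mul_mem hρ h) (inv_mem hρ)
  rwa [mul_swap_mul_swap_mul_inv, crossShift_apply_of_mem (by omega) (by omega),
    crossShift_apply_of_mem (by omega) (by omega),
    crossShift_apply_of_mem (by omega) (by omega)] at this

theorem swap_mul_swap_mem_C (hn : 6 ≤ n) (hm : n + 3 ≤ m) {a : ℕ} (ha : 1 ≤ a)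
    (ham : a + 4 ≤ m) : swap a (a + 2) * swap (a + 2) (a + 4) ∈ C n m := by
  induction a using Nat.strong_induction_on with
  | _ a ih =>
    rcases le_or_gt a 2 with h | h
    · exact swap_mul_swap_mem_C_base hn hm ha h
    · obtain ⟨b, rfl⟩ : ∃ b, a = b + 2 := ⟨a - 2, by omega⟩
      exact swap_mul_swap_mem_C_succ hn (by omega) (by omega) (by omega)
        (ih b (by omega) (by omega) (by omega))

end threeCycle

theorem parityClass_subset_image {r : ℕ} (hr : r < 2) (m : ℕ) :
    parityClass r m ⊆ (fun i => 2 * i + (2 - r)) '' Set.Iio ((m + r) / 2) := by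
  rintro x ⟨hxr, hx1, hxm⟩
  refine ⟨(x + r - 2) / 2, ?_, ?_⟩
  · simp only [Set.mem_Iio]
    omega
  · change 2 * ((x + r - 2) / 2) + (2 - r) = x
    omega

theorem evenPermsOn_parityClass_le_C {n m r : ℕ} (hn : 6 ≤ n) (hm : n + 3 ≤ m) (hr : r < 2) :
    evenPermsOn (parityClass r m) ≤ C n m := by
  refine (evenPermsOn_mono (parityClass_subset_image hr m)).trans
    (evenPermsOn_image_le (fun i j (h : 2 * i + (2 - r) = 2 * j + (2 - r)) => by omega)
      fun i hi => ?_)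
  convert swap_mul_swap_mem_C hn hm (a := 2 * i + (2 - r)) (by omega) (by omega) using 3 <;> omega

theorem disjoint_parityClass_one_zero (m : ℕ) : Disjoint (parityClass 1 m) (parityClass 0 m) :=
  Set.disjoint_left.2 fun _ h₁ h₀ => by simp only [parityClass, Set.mem_ofPred_eq] at h₁ h₀; omega

theorem evenPermsOn_parityClass_mod_two_le_sup (a m : ℕ) :
    evenPermsOn (parityClass (a % 2) m) ≤
      evenPermsOn (parityClass 1 m) ⊔ evenPermsOn (parityClass 0 m) := by
  rcases Nat.mod_two_eq_zero_or_one a with h | h <;> rw [h]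
  exacts [le_sup_right, le_sup_left]

theorem C_eq_evenPermsOn_sup {n m : ℕ} (hn : n % 8 = 1) (hn9 : 9 ≤ n) (hm : n + 3 ≤ m) :
    C n m = evenPermsOn (parityClass 1 m) ⊔ evenPermsOn (parityClass 0 m) := by
  refine le_antisymm ((Subgroup.closure_le _).2 ?_) (sup_le
    (evenPermsOn_parityClass_le_C (by omega) hm (by omega))
    (evenPermsOn_parityClass_le_C (by omega) hm (by omega)))
  rintro _ ⟨j, hj, hjm, rfl⟩
  obtain ⟨k, rfl⟩ : ∃ k, n = 4 * (2 * k) + 1 := ⟨n / 8, by omega⟩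
  rw [crossPerm_eq_mirrorSwaps_prod_mul]
  exact mul_mem
    (evenPermsOn_parityClass_mod_two_le_sup j m
      (mirrorSwaps_prod_mem (by omega) (by omega) (even_two_mul k) hj (by omega)))
    (evenPermsOn_parityClass_mod_two_le_sup (j + 1) m
      (mirrorSwaps_prod_mem (by omega) (by omega) (even_two_mul k) (by omega) (by omega)))

theorem stmt19_general (n : ℕ) (hn : n % 8 = 1) (hn9 : 9 ≤ n) :
    ∀ σ : Equiv.Perm ℕ, σ ∈ C n (n + 3) ↔
      ∃ σodd σeven : Equiv.Perm ℕ,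
        (∀ i, σodd i ≠ i → i % 2 = 1 ∧ 1 ≤ i ∧ i ≤ n + 3) ∧
        (∀ i, σeven i ≠ i → i % 2 = 0 ∧ 1 ≤ i ∧ i ≤ n + 3) ∧
        IsEvenPerm σodd ∧ IsEvenPerm σeven ∧ σ = σodd * σeven := by
  intro σ
  rw [C_eq_evenPermsOn_sup hn hn9 le_rfl, mem_evenPermsOn_sup (disjoint_parityClass_one_zero _)]
  simp only [mem_evenPermsOn, parityClass, Set.mem_ofPred_eq]
  constructor
  · rintro ⟨a, ⟨ha, hae⟩, b, ⟨hb, hbe⟩, rfl⟩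
    exact ⟨a, b, ha, hb, hae, hbe, rfl⟩
  · rintro ⟨a, b, ha, hb, hae, hbe, rfl⟩
    exact ⟨a, ⟨ha, hae⟩, b, ⟨hb, hbe⟩, rfl⟩

theorem stmt19 (n : ℕ) (hn : n % 8 = 1) (hn9 : 9 ≤ n) (hn201 : n ≤ 201) :
    ∀ σ : Equiv.Perm ℕ, σ ∈ C n (n + 3) ↔
      ∃ σodd σeven : Equiv.Perm ℕ,
        (∀ i, σodd i ≠ i → i % 2 = 1 ∧ 1 ≤ i ∧ i ≤ n + 3) ∧
        (∀ i, σeven i ≠ i → i % 2 = 0 ∧ 1 ≤ i ∧ i ≤ n + 3) ∧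
        IsEvenPerm σodd ∧ IsEvenPerm σeven ∧ σ = σodd * σeven :=
  stmt19_general n hn hn9
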